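/- Mixed composition (delta after nabla): let f be a real function on the grid {a, a+1, a+2, …} and α, β > 0. Let G be the grid function G(a+m) := (∇_a^{−β} f)(a+m) for m ∈ ℕ. Then for every n ∈ ℕ with t = a + n, (Δ_a^{−α} G)(t+α) = (∇_a^{−(α+β)} f)(t). -/

import Mathlib

open Finset

/-- Falling factorial function `t^(ν) = Γ(t+1)/Γ(t+1-ν)` (with the convention
`1/Γ(z) = 0` for `z` a nonpositive integer, automatic since `Real.Gamma`
vanishes there and division by zero is zero). -/
noncomputable def fall (t ν : ℝ) : ℝ := Real.Gamma (t + 1) / Real.Gamma (t + 1 - ν)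

/-- Rising factorial function `t^↑ν = Γ(t+ν)/Γ(t)`. -/
noncomputable def rise (t ν : ℝ) : ℝ := Real.Gamma (t + ν) / Real.Gamma t

/-- Delta fractional sum `(Δ_a^{-ν} f)(t+ν)` at `t = a + n`. -/
noncomputable def deltaSum (a ν : ℝ) (f : ℝ → ℝ) (n : ℕ) : ℝ :=
  (1 / Real.Gamma ν) * ∑ j ∈ Finset.range (n + 1),
    fall ((a + n) + ν - (a + j) - 1) (ν - 1) * f (a + j)

/-- Nabla fractional sum `(∇_a^{-ν} f)(t)` at `t = a + n`. -/
noncomputable def nablaSum (a ν : ℝ) (f : ℝ → ℝ) (n : ℕ) : ℝ :=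
  (1 / Real.Gamma ν) * ∑ j ∈ Finset.range (n + 1),
    rise ((a + n) - (a + j) + 1) (ν - 1) * f (a + j)

/-- Diamond-γ fractional sum of order (α, β) at `t = a + n`. -/
noncomputable def diamond (γ a α β : ℝ) (f : ℝ → ℝ) (n : ℕ) : ℝ :=
  γ * deltaSum a α f n + (1 - γ) * nablaSum a β f n

/-- Backward difference `(∇ g)(t) = g(t) - g(t-1)`; `bdiff^[k]` is `∇^k`. -/
noncomputable def bdiff (g : ℝ → ℝ) : ℝ → ℝ := fun t => g t - g (t - 1)

/-- Generalized binomial coefficient `binom(u,v) = Γ(u+1)/(Γ(v+1)Γ(u-v+1))`. -/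
noncomputable def binomR (u v : ℝ) : ℝ :=
  Real.Gamma (u + 1) / (Real.Gamma (v + 1) * Real.Gamma (u - v + 1))

/-!
For `ν > 0` both kernels reduce to `Γ(ν + m) / (Γ(ν) m!) = multichoose ν m`, the `m`-th
coefficient of `(1 - X) ^ (-ν)`. So both fractional sums of `f` at `a + n` are the `n`-th
coefficient of `(∑ f(a + j) X ^ j) * (1 - X) ^ (-ν)`, and the composition law becomes
`(1 - X) ^ (-α) * (1 - X) ^ (-β) = (1 - X) ^ (-(α + β))`, i.e. Chu–Vandermonde.
-/

open PowerSeries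

theorem Real.Gamma_add_nat_eq_mul_ascPochhammer {ν : ℝ} (hν : ∀ k : ℕ, ν ≠ -k) (m : ℕ) :
    Real.Gamma (ν + m) = Real.Gamma ν * (ascPochhammer ℝ m).eval ν := by
  induction m with
  | zero => simp
  | succ m ih =>
    rw [Nat.cast_succ, ← add_assoc,
      Real.Gamma_add_one fun h => hν m (eq_neg_of_add_eq_zero_left h), ih, ascPochhammer_succ_eval]
    ring

theorem Ring.multichoose_eq_ascPochhammer_eval_div {K : Type*} [Field K] [CharZero K]
    (r : K) (m : ℕ) : Ring.multichoose r m = (ascPochhammer K m).eval r / m.factorial := by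
  have h := Ring.factorial_nsmul_multichoose_eq_ascPochhammer r m
  rw [Polynomial.ascPochhammer_smeval_eq_eval, nsmul_eq_mul] at h
  rw [← h, mul_div_cancel_left₀ _ (Nat.cast_ne_zero.mpr m.factorial_ne_zero)]

theorem Real.Gamma_add_nat_div_eq_multichoose {ν : ℝ} (hν : ∀ k : ℕ, ν ≠ -k) (m : ℕ) :
    Real.Gamma (ν + m) / (Real.Gamma ν * m.factorial) = Ring.multichoose ν m := by
  rw [Ring.multichoose_eq_ascPochhammer_eval_div, Real.Gamma_add_nat_eq_mul_ascPochhammer hν,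
    mul_div_mul_left _ _ (Real.Gamma_ne_zero hν)]

theorem ne_neg_natCast_of_pos {x : ℝ} (hx : 0 < x) (k : ℕ) : x ≠ -k :=
  ((neg_nonpos.mpr k.cast_nonneg).trans_lt hx).ne'

theorem rise_nat_add_one_div_Gamma {ν : ℝ} (hν : 0 < ν) (m : ℕ) :
    rise (m + 1) (ν - 1) / Real.Gamma ν = Ring.multichoose ν m := by
  rw [rise, show (m : ℝ) + 1 + (ν - 1) = ν + m by ring, Real.Gamma_nat_eq_factorial, div_div,
    mul_comm (m.factorial : ℝ), Real.Gamma_add_nat_div_eq_multichoose (ne_neg_natCast_of_pos hν)]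

theorem fall_nat_add_sub_one_div_Gamma {ν : ℝ} (hν : 0 < ν) (m : ℕ) :
    fall (m + ν - 1) (ν - 1) / Real.Gamma ν = Ring.multichoose ν m := by
  rw [fall, show (m : ℝ) + ν - 1 + 1 = ν + m by ring, show ν + m - (ν - 1) = (m : ℝ) + 1 by ring,
    Real.Gamma_nat_eq_factorial, div_div, mul_comm (m.factorial : ℝ),
    Real.Gamma_add_nat_div_eq_multichoose (ne_neg_natCast_of_pos hν)]

namespace PowerSeries

variable {R : Type*} [CommRing R] [BinomialRing R]

/-- The power series of `(1 - X) ^ (-r)`. -/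
noncomputable def multichooseSeries (r : R) : R⟦X⟧ := mk (Ring.multichoose r)

theorem multichooseSeries_eq_rescale_binomialSeries (r : R) :
    multichooseSeries r = rescale (-1) (binomialSeries R (-r)) := by
  ext m
  rw [multichooseSeries, coeff_mk, coeff_rescale, binomialSeries_coeff, Ring.choose_neg',
    Units.smul_def, ← Int.cast_negOnePow_natCast R, smul_eq_mul, mul_one, zsmul_eq_mul,
    ← mul_assoc, ← Int.cast_mul, ← Units.val_mul, Int.units_mul_self, Units.val_one,
    Int.cast_one, one_mul]

theorem multichooseSeries_add (r s : R) :
    multichooseSeries (r + s) = multichooseSeries r * multichooseSeries s := by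
  simp only [multichooseSeries_eq_rescale_binomialSeries, neg_add, binomialSeries_add, map_mul]

end PowerSeries

noncomputable def gridSeries (a : ℝ) (f : ℝ → ℝ) : ℝ⟦X⟧ := mk fun j => f (a + j)

theorem coeff_gridSeries_mul (a : ℝ) (f : ℝ → ℝ) (φ : ℝ⟦X⟧) (n : ℕ) :
    coeff n (gridSeries a f * φ) = ∑ j ∈ range (n + 1), coeff (n - j) φ * f (a + j) := by
  rw [coeff_mul, Nat.sum_antidiagonal_eq_sum_range_succ fun i k =>
    coeff i (gridSeries a f) * coeff k φ]
  simp only [gridSeries, coeff_mk, mul_comm]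

theorem nablaSum_eq_coeff {ν : ℝ} (hν : 0 < ν) (a : ℝ) (f : ℝ → ℝ) (n : ℕ) :
    nablaSum a ν f n = coeff n (gridSeries a f * multichooseSeries ν) := by
  rw [nablaSum, coeff_gridSeries_mul, mul_sum]
  refine sum_congr rfl fun j hj => ?_
  rw [multichooseSeries, coeff_mk, ← rise_nat_add_one_div_Gamma hν,
    Nat.cast_sub (mem_range_succ_iff.mp hj), add_sub_add_left_eq_sub]
  ring

theorem deltaSum_eq_coeff {ν : ℝ} (hν : 0 < ν) (a : ℝ) (f : ℝ → ℝ) (n : ℕ) :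
    deltaSum a ν f n = coeff n (gridSeries a f * multichooseSeries ν) := by
  rw [deltaSum, coeff_gridSeries_mul, mul_sum]
  refine sum_congr rfl fun j hj => ?_
  have hjn : a + n + ν - (a + j) - 1 = ((n - j : ℕ) : ℝ) + ν - 1 := by
    rw [Nat.cast_sub (mem_range_succ_iff.mp hj)]
    ring
  rw [multichooseSeries, coeff_mk, ← fall_nat_add_sub_one_div_Gamma hν, hjn]
  ring

/-- mixed composition (delta after nabla). -/
theorem delta_nabla (a α β : ℝ) (hα : 0 < α) (hβ : 0 < β) (f G : ℝ → ℝ)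
    (hG : ∀ m : ℕ, G (a + m) = nablaSum a β f m) (n : ℕ) :
    deltaSum a α G n = nablaSum a (α + β) f n := by
  have hGf : gridSeries a G = gridSeries a f * multichooseSeries β := by
    ext m
    rw [← nablaSum_eq_coeff hβ, ← hG, gridSeries, coeff_mk]
  rw [deltaSum_eq_coeff hα, nablaSum_eq_coeff (add_pos hα hβ), hGf, add_comm α β,
    multichooseSeries_add, mul_assoc]
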